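/- arXiv:2012.11359 — 7 statements merged into one kernel-verified Lean document; each statement's English description precedes it below -/
import Mathlib

section
/- For every X in A, the product X·X* has zero coefficients on all six imaginary dimensions; explicitly X·X* = a(X) • e₀ + b(X) • e₇. -/
noncomputable section

/-- Standard basis vectors of `A := Fin 8 → ℝ`: `e i j = 1` if `i = j`, else `0`. -/
def e (i : Fin 8) : Fin 8 → ℝ := fun j => if i = j then 1 else 0

/-- The octonion-like (split-biquaternion) product on `Fin 8 → ℝ`: the unique bilinear
multiplication determined by the multiplication table on the basis `e 0, …, e 7`
(with `e 0` the two-sided identity, `e 7 · e 7 = e 0`, `e i · e i = -e 0` for `1 ≤ i ≤ 6`, etc.),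
written out in coordinates. -/
def omul (X Y : Fin 8 → ℝ) : Fin 8 → ℝ :=
  ![X 0*Y 0 - X 1*Y 1 - X 2*Y 2 - X 3*Y 3 - X 4*Y 4 - X 5*Y 5 - X 6*Y 6 + X 7*Y 7,
    X 1*Y 0 + X 0*Y 1 - X 3*Y 2 + X 2*Y 3 + X 5*Y 4 - X 4*Y 5 - X 7*Y 6 - X 6*Y 7,
    X 2*Y 0 + X 3*Y 1 + X 0*Y 2 - X 1*Y 3 - X 6*Y 4 - X 7*Y 5 + X 4*Y 6 - X 5*Y 7,
    X 3*Y 0 - X 2*Y 1 + X 1*Y 2 + X 0*Y 3 - X 7*Y 4 + X 6*Y 5 - X 5*Y 6 - X 4*Y 7,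
    X 4*Y 0 - X 5*Y 1 + X 6*Y 2 - X 7*Y 3 + X 0*Y 4 + X 1*Y 5 - X 2*Y 6 - X 3*Y 7,
    X 5*Y 0 + X 4*Y 1 - X 7*Y 2 - X 6*Y 3 - X 1*Y 4 + X 0*Y 5 + X 3*Y 6 - X 2*Y 7,
    X 6*Y 0 - X 7*Y 1 - X 4*Y 2 + X 5*Y 3 + X 2*Y 4 - X 3*Y 5 + X 0*Y 6 - X 1*Y 7,
    X 7*Y 0 + X 6*Y 1 + X 5*Y 2 + X 4*Y 3 + X 3*Y 4 + X 2*Y 5 + X 1*Y 6 + X 0*Y 7]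

/-- The conjugate (reverse) of `X`: negate the six imaginary coordinates `1,…,6`. -/
def oconj (X : Fin 8 → ℝ) : Fin 8 → ℝ :=
  ![X 0, -X 1, -X 2, -X 3, -X 4, -X 5, -X 6, X 7]

/-- `a(X) = ∑ i, (X i)²`. -/
def aQ (X : Fin 8 → ℝ) : ℝ := ∑ i, (X i)^2

/-- `b(X) = 2 X₀X₇ − 2 (X₁X₆ + X₂X₅ + X₃X₄)`. -/
def bQ (X : Fin 8 → ℝ) : ℝ := 2*(X 0)*(X 7) - 2*((X 1)*(X 6) + (X 2)*(X 5) + (X 3)*(X 4))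

/-- Squared seminorm `N_λ(X) = a(X) + λ·b(X)` (used with `λ = 1` and `λ = -1`). -/
def Nsq (lam : ℝ) (X : Fin 8 → ℝ) : ℝ := aQ X + lam * bQ X

/-- Matrix of left multiplication by `X`: column `j` is the coordinate vector of `X · eⱼ`. -/
def MX (X : Fin 8 → ℝ) : Matrix (Fin 8) (Fin 8) ℝ := Matrix.of fun i j => omul X (e j) i

/-- Matrix of right multiplication by `X`: column `j` is the coordinate vector of `eⱼ · X`. -/
def PX (X : Fin 8 → ℝ) : Matrix (Fin 8) (Fin 8) ℝ := Matrix.of fun i j => omul (e j) X i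

/-- The matrix `J` with `J 0 7 = J 7 0 = 1`, `J i (7-i) = -1` for `1 ≤ i ≤ 6`, else `0`. -/
def J : Matrix (Fin 8) (Fin 8) ℝ :=
  !![0, 0, 0, 0, 0, 0, 0, 1;
     0, 0, 0, 0, 0, 0, -1, 0;
     0, 0, 0, 0, 0, -1, 0, 0;
     0, 0, 0, 0, -1, 0, 0, 0;
     0, 0, 0, -1, 0, 0, 0, 0;
     0, 0, -1, 0, 0, 0, 0, 0;
     0, -1, 0, 0, 0, 0, 0, 0;
     1, 0, 0, 0, 0, 0, 0, 0]

lemma cons_five (a b c d f g h i : ℝ) : ![a,b,c,d,f,g,h,i] 5 = g := rfl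
lemma cons_six (a b c d f g h i : ℝ) : ![a,b,c,d,f,g,h,i] 6 = h := rfl
lemma cons_seven (a b c d f g h i : ℝ) : ![a,b,c,d,f,g,h,i] 7 = i := rfl

set_option maxHeartbeats 1600000 in
/-- `X·X*` has zero coefficients on all six imaginary dimensions:
`X·X* = a(X) • e₀ + b(X) • e₇`. -/
theorem omul_oconj_eq (X : Fin 8 → ℝ) :
    omul X (oconj X) = aQ X • e 0 + bQ X • e 7 := by
  funext j
  fin_cases j <;>
    simp [omul, oconj, aQ, bQ, e, Fin.sum_univ_eight, Pi.add_apply, Pi.smul_apply, cons_five, cons_six, cons_seven] <;> ring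
end
end

section
/- For every X in A, the product X·X* is central in the relevant sense: X·X* = X*·X, and for every Y in A one has (X·X*)·Y = Y·(X·X*). -/
noncomputable section
set_option maxHeartbeats 2000000

lemma vec8_five {α : Type*} (a b c d e f g h : α) : ![a,b,c,d,e,f,g,h] (5 : Fin 8) = f := rfl
lemma vec8_six {α : Type*} (a b c d e f g h : α) : ![a,b,c,d,e,f,g,h] (6 : Fin 8) = g := rfl
lemma vec8_seven {α : Type*} (a b c d e f g h : α) : ![a,b,c,d,e,f,g,h] (7 : Fin 8) = h := rfl

lemma omul_oconj_eq_s3 (X : Fin 8 → ℝ) :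
    omul X (oconj X) =
      ![X 0^2 + X 1^2 + X 2^2 + X 3^2 + X 4^2 + X 5^2 + X 6^2 + X 7^2,
        0, 0, 0, 0, 0, 0,
        2*X 0*X 7 - 2*X 1*X 6 - 2*X 2*X 5 - 2*X 3*X 4] := by
  funext i
  fin_cases i <;> simp [omul, oconj, vec8_five, vec8_six, vec8_seven] <;> ring

/-- `X·X*` is central: `X·X* = X*·X` and `(X·X*)·Y = Y·(X·X*)` for all `Y`. -/
theorem omul_oconj_central (X : Fin 8 → ℝ) :
    omul X (oconj X) = omul (oconj X) X ∧
    ∀ Y : Fin 8 → ℝ, omul (omul X (oconj X)) Y = omul Y (omul X (oconj X)) := by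
  constructor
  · funext i
    fin_cases i <;> simp [omul, oconj, vec8_five, vec8_six, vec8_seven] <;> ring
  · intro Y
    rw [omul_oconj_eq_s3]
    funext i
    fin_cases i <;> simp [omul, vec8_five, vec8_six, vec8_seven] <;> ring
end
end

section
/- The octonion-like algebra is a seminormed composition algebra: for λ = 1 and for λ = −1, and for all X, Y in A, N_λ(X·Y) = N_λ(X)·N_λ(Y). -/
noncomputable section

lemma omul_apply (X Y : Fin 8 → ℝ) :
    omul X Y 0 = X 0*Y 0 - X 1*Y 1 - X 2*Y 2 - X 3*Y 3 - X 4*Y 4 - X 5*Y 5 - X 6*Y 6 + X 7*Y 7 ∧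
    omul X Y 1 = X 1*Y 0 + X 0*Y 1 - X 3*Y 2 + X 2*Y 3 + X 5*Y 4 - X 4*Y 5 - X 7*Y 6 - X 6*Y 7 ∧
    omul X Y 2 = X 2*Y 0 + X 3*Y 1 + X 0*Y 2 - X 1*Y 3 - X 6*Y 4 - X 7*Y 5 + X 4*Y 6 - X 5*Y 7 ∧
    omul X Y 3 = X 3*Y 0 - X 2*Y 1 + X 1*Y 2 + X 0*Y 3 - X 7*Y 4 + X 6*Y 5 - X 5*Y 6 - X 4*Y 7 ∧
    omul X Y 4 = X 4*Y 0 - X 5*Y 1 + X 6*Y 2 - X 7*Y 3 + X 0*Y 4 + X 1*Y 5 - X 2*Y 6 - X 3*Y 7 ∧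
    omul X Y 5 = X 5*Y 0 + X 4*Y 1 - X 7*Y 2 - X 6*Y 3 - X 1*Y 4 + X 0*Y 5 + X 3*Y 6 - X 2*Y 7 ∧
    omul X Y 6 = X 6*Y 0 - X 7*Y 1 - X 4*Y 2 + X 5*Y 3 + X 2*Y 4 - X 3*Y 5 + X 0*Y 6 - X 1*Y 7 ∧
    omul X Y 7 = X 7*Y 0 + X 6*Y 1 + X 5*Y 2 + X 4*Y 3 + X 3*Y 4 + X 2*Y 5 + X 1*Y 6 + X 0*Y 7 :=
  ⟨rfl, rfl, rfl, rfl, rfl, rfl, rfl, rfl⟩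

/-- Seminormed composition algebra: for `λ = 1` and `λ = -1`,
`N_λ(X·Y) = N_λ(X) · N_λ(Y)` for all `X, Y`. -/
theorem Nsq_omul (lam : ℝ) (hlam : lam = 1 ∨ lam = -1) (X Y : Fin 8 → ℝ) :
    Nsq lam (omul X Y) = Nsq lam X * Nsq lam Y := by
  obtain ⟨h0, h1, h2, h3, h4, h5, h6, h7⟩ := omul_apply X Y
  rcases hlam with h | h <;> subst h <;>
    simp only [Nsq, aQ, bQ, Fin.sum_univ_eight, h0, h1, h2, h3, h4, h5, h6, h7] <;> ring
end
end

section
/- For every X in A, the matrix identity M_Xᵀ * J * M_X = J * M_Xᵀ * M_X holds. -/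
open Matrix

noncomputable section

/-- The matrix `J` with `matJ 0 7 = matJ 7 0 = 1`, `matJ i (7-i) = -1` for `1 ≤ i ≤ 6`, else `0`. -/
def matJ : Matrix (Fin 8) (Fin 8) ℝ :=
  !![0, 0, 0, 0, 0, 0, 0, 1;
     0, 0, 0, 0, 0, 0, -1, 0;
     0, 0, 0, 0, 0, -1, 0, 0;
     0, 0, 0, 0, -1, 0, 0, 0;
     0, 0, 0, -1, 0, 0, 0, 0;
     0, 0, -1, 0, 0, 0, 0, 0;
     0, -1, 0, 0, 0, 0, 0, 0;
     1, 0, 0, 0, 0, 0, 0, 0]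

@[simp] lemma cons_val_five' {α} {m : ℕ} (x : α) (u : Fin (m+5) → α) :
    Matrix.vecCons x u 5 =
      Matrix.vecHead (Matrix.vecTail (Matrix.vecTail (Matrix.vecTail (Matrix.vecTail u)))) := rfl
@[simp] lemma cons_val_six' {α} {m : ℕ} (x : α) (u : Fin (m+6) → α) :
    Matrix.vecCons x u 6 =
      Matrix.vecHead (Matrix.vecTail (Matrix.vecTail (Matrix.vecTail (Matrix.vecTail
        (Matrix.vecTail u))))) := rfl
@[simp] lemma cons_val_seven' {α} {m : ℕ} (x : α) (u : Fin (m+7) → α) :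
    Matrix.vecCons x u 7 =
      Matrix.vecHead (Matrix.vecTail (Matrix.vecTail (Matrix.vecTail (Matrix.vecTail
        (Matrix.vecTail (Matrix.vecTail u)))))) := rfl

@[simp] lemma vecHead_const' {α} {n : ℕ} (c : α) :
    Matrix.vecHead (fun _ : Fin (n+1) => c) = c := rfl
@[simp] lemma vecTail_const' {α} {n : ℕ} (c : α) :
    Matrix.vecTail (fun _ : Fin (n+1) => c) = fun _ : Fin n => c := rfl

lemma matJ_transpose : matJᵀ = matJ := by
  ext i j
  fin_cases i <;> fin_cases j <;> simp [matJ]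

set_option maxHeartbeats 4000000 in
lemma MX_comm_J (X : Fin 8 → ℝ) : MX X * matJ = matJ * MX X := by
  ext i j
  fin_cases i <;> fin_cases j <;>
    simp [Matrix.mul_apply, Fin.sum_univ_eight, matJ, MX, omul, e]

/-- `M_Xᵀ * matJ * M_X = matJ * M_Xᵀ * M_X`. -/
theorem MX_transpose_J_MX (X : Fin 8 → ℝ) :
    (MX X)ᵀ * matJ * MX X = matJ * (MX X)ᵀ * MX X := by
  have h2 : (MX X)ᵀ * matJ = matJ * (MX X)ᵀ := by
    calc (MX X)ᵀ * matJ = (MX X)ᵀ * matJᵀ := by rw [matJ_transpose]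
      _ = (matJ * MX X)ᵀ := by rw [Matrix.transpose_mul]
      _ = (MX X * matJ)ᵀ := by rw [MX_comm_J]
      _ = matJᵀ * (MX X)ᵀ := by rw [Matrix.transpose_mul]
      _ = matJ * (MX X)ᵀ := by rw [matJ_transpose]
  rw [h2]
end
end

section
/- The octonion-like algebra is a seminormed division algebra: if X in A satisfies N₁(X) ≠ 0 and N₋₁(X) ≠ 0, then there exists a unique W in A such that X·W = e₀ and W·X = e₀. -/
noncomputable section

/-! `e 7` is central with `e 7 · e 7 = e 0`, so `a e₀ + b e₇` behaves like the split-complex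
number `a + b j`, whose inverse is `(a − b j) / (a² − b²)`. The conjugate satisfies
`X · X̄ = X̄ · X = a(X) e₀ + b(X) e₇`, and `a(X)² − b(X)² = N₁(X) N₋₁(X)`, so
`X⁻¹ = X̄ · (a(X) e₀ − b(X) e₇) / (N₁(X) N₋₁(X))` is a two-sided inverse.
Since the product is associative, a left inverse agrees with every right inverse. -/

def splitComplex (a b : ℝ) : Fin 8 → ℝ := a • e 0 + b • e 7

def oinv (X : Fin 8 → ℝ) : Fin 8 → ℝ :=
  (Nsq 1 X * Nsq (-1) X)⁻¹ • omul (oconj X) (splitComplex (aQ X) (-bQ X))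

section SplitBiquaternion

variable (X Y Z : Fin 8 → ℝ)

theorem omul_assoc : omul (omul X Y) Z = omul X (omul Y Z) := by
  ext i; fin_cases i <;> simp [omul] <;> ring

theorem omul_e_zero : omul X (e 0) = X := by
  ext i; fin_cases i <;> simp [omul, e]

theorem e_zero_omul : omul (e 0) X = X := by
  ext i; fin_cases i <;> simp [omul, e]

theorem omul_smul (c : ℝ) : omul X (c • Y) = c • omul X Y := by
  ext i; fin_cases i <;> simp [omul] <;> ring

theorem smul_omul (c : ℝ) : omul (c • X) Y = c • omul X Y := by
  ext i; fin_cases i <;> simp [omul] <;> ring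

theorem splitComplex_omul_comm (a b : ℝ) :
    omul (splitComplex a b) X = omul X (splitComplex a b) := by
  ext i; fin_cases i <;> simp [omul, splitComplex, e] <;> ring

theorem splitComplex_omul_splitComplex_neg (a b : ℝ) :
    omul (splitComplex a b) (splitComplex a (-b)) = (a ^ 2 - b ^ 2) • e 0 := by
  ext i; fin_cases i <;> simp [omul, splitComplex, e] <;> ring

theorem omul_oconj : omul X (oconj X) = splitComplex (aQ X) (bQ X) := by
  ext i; fin_cases i <;> simp [omul, oconj, splitComplex, aQ, bQ, e, Fin.sum_univ_eight] <;> ring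

theorem oconj_omul : omul (oconj X) X = splitComplex (aQ X) (bQ X) := by
  ext i; fin_cases i <;> simp [omul, oconj, splitComplex, aQ, bQ, e, Fin.sum_univ_eight] <;> ring

theorem Nsq_one_mul_Nsq_neg_one : Nsq 1 X * Nsq (-1) X = aQ X ^ 2 - bQ X ^ 2 := by
  simp only [Nsq]; ring

variable {X}

theorem omul_oinv (hX : Nsq 1 X * Nsq (-1) X ≠ 0) : omul X (oinv X) = e 0 := by
  rw [oinv, omul_smul, ← omul_assoc, omul_oconj, splitComplex_omul_splitComplex_neg,
    ← Nsq_one_mul_Nsq_neg_one, smul_smul, inv_mul_cancel₀ hX, one_smul]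

theorem oinv_omul (hX : Nsq 1 X * Nsq (-1) X ≠ 0) : omul (oinv X) X = e 0 := by
  rw [oinv, smul_omul, omul_assoc, splitComplex_omul_comm, ← omul_assoc, oconj_omul,
    splitComplex_omul_splitComplex_neg, ← Nsq_one_mul_Nsq_neg_one, smul_smul,
    inv_mul_cancel₀ hX, one_smul]

theorem eq_of_omul_eq_e_zero {W V : Fin 8 → ℝ} (hW : omul W X = e 0) (hV : omul X V = e 0) :
    W = V := by
  rw [← omul_e_zero W, ← hV, ← omul_assoc, hW, e_zero_omul]

end SplitBiquaternion

/-- Seminormed division algebra: if `N₁(X) ≠ 0` and `N₋₁(X) ≠ 0` then `X` has a unique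
two-sided inverse. -/
theorem exists_unique_inverse (X : Fin 8 → ℝ)
    (h1 : Nsq 1 X ≠ 0) (h2 : Nsq (-1) X ≠ 0) :
    ∃! W : Fin 8 → ℝ, omul X W = e 0 ∧ omul W X = e 0 := by
  have hX := mul_ne_zero h1 h2
  exact ⟨oinv X, ⟨omul_oinv hX, oinv_omul hX⟩,
    fun W hW => (eq_of_omul_eq_e_zero (oinv_omul hX) hW.1).symm⟩
end
end

section
/- For every U in A with U·U = −e₀, the map X ↦ −(U·(X·U)) is an involution of A: for all X in A, U·((U·(X·U))·U) = X (equivalently, applying X ↦ −(U·(X·U)) twice returns X). -/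
noncomputable section

theorem vec8_5 {α : Type*} (a b c d e f g h : α) : ![a,b,c,d,e,f,g,h] 5 = f := rfl
theorem vec8_6 {α : Type*} (a b c d e f g h : α) : ![a,b,c,d,e,f,g,h] 6 = g := rfl
theorem vec8_7 {α : Type*} (a b c d e f g h : α) : ![a,b,c,d,e,f,g,h] 7 = h := rfl

theorem omul_c0 (X Y : Fin 8 → ℝ) : omul X Y 0 = X 0*Y 0 - X 1*Y 1 - X 2*Y 2 - X 3*Y 3 - X 4*Y 4 - X 5*Y 5 - X 6*Y 6 + X 7*Y 7 := rfl
theorem omul_c1 (X Y : Fin 8 → ℝ) : omul X Y 1 = X 1*Y 0 + X 0*Y 1 - X 3*Y 2 + X 2*Y 3 + X 5*Y 4 - X 4*Y 5 - X 7*Y 6 - X 6*Y 7 := rfl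
theorem omul_c2 (X Y : Fin 8 → ℝ) : omul X Y 2 = X 2*Y 0 + X 3*Y 1 + X 0*Y 2 - X 1*Y 3 - X 6*Y 4 - X 7*Y 5 + X 4*Y 6 - X 5*Y 7 := rfl
theorem omul_c3 (X Y : Fin 8 → ℝ) : omul X Y 3 = X 3*Y 0 - X 2*Y 1 + X 1*Y 2 + X 0*Y 3 - X 7*Y 4 + X 6*Y 5 - X 5*Y 6 - X 4*Y 7 := rfl
theorem omul_c4 (X Y : Fin 8 → ℝ) : omul X Y 4 = X 4*Y 0 - X 5*Y 1 + X 6*Y 2 - X 7*Y 3 + X 0*Y 4 + X 1*Y 5 - X 2*Y 6 - X 3*Y 7 := rfl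
theorem omul_c5 (X Y : Fin 8 → ℝ) : omul X Y 5 = X 5*Y 0 + X 4*Y 1 - X 7*Y 2 - X 6*Y 3 - X 1*Y 4 + X 0*Y 5 + X 3*Y 6 - X 2*Y 7 := rfl
theorem omul_c6 (X Y : Fin 8 → ℝ) : omul X Y 6 = X 6*Y 0 - X 7*Y 1 - X 4*Y 2 + X 5*Y 3 + X 2*Y 4 - X 3*Y 5 + X 0*Y 6 - X 1*Y 7 := rfl
theorem omul_c7 (X Y : Fin 8 → ℝ) : omul X Y 7 = X 7*Y 0 + X 6*Y 1 + X 5*Y 2 + X 4*Y 3 + X 3*Y 4 + X 2*Y 5 + X 1*Y 6 + X 0*Y 7 := rfl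

set_option maxHeartbeats 2000000 in
theorem omul_assoc2 (A B C : Fin 8 → ℝ) : omul (omul A B) C = omul A (omul B C) := by
  funext i
  fin_cases i <;> simp [omul_c0, omul_c1, omul_c2, omul_c3, omul_c4, omul_c5, omul_c6, omul_c7] <;> ring

theorem omul_neg_e0_left (Y : Fin 8 → ℝ) : omul (-e 0) Y = -Y := by
  funext i
  fin_cases i <;> simp [omul, e, vec8_5, vec8_6, vec8_7]

theorem omul_neg_e0_right (Y : Fin 8 → ℝ) : omul Y (-e 0) = -Y := by
  funext i
  fin_cases i <;> simp [omul, e, vec8_5, vec8_6, vec8_7]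

/-- For `U` with `U·U = -e₀`, the map `X ↦ -(U·(X·U))` is an involution:
`U·((U·(X·U))·U) = X`. -/
theorem conj_involution (U : Fin 8 → ℝ) (hU : omul U U = -e 0) (X : Fin 8 → ℝ) :
    omul U (omul (omul U (omul X U)) U) = X := by
  have h1 : omul (omul X U) U = -X := by
    rw [omul_assoc2, hU, omul_neg_e0_right]
  calc omul U (omul (omul U (omul X U)) U)
      = omul U (omul U (omul (omul X U) U)) := by rw [omul_assoc2 U (omul X U) U]
    _ = omul (omul U U) (omul (omul X U) U) := (omul_assoc2 U U _).symm
    _ = X := by rw [h1, hU, omul_neg_e0_left, neg_neg]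
end
end

section
/- The sum of the eight basis conjugations of X extracts the two real (non-imaginary) components scaled by 8: for every X in A, X − ∑_{i=1}^{6} eᵢ·(X·eᵢ) + e₇·(X·e₇) = (8·(X 0)) • e₀ + (8·(X 7)) • e₇. -/
noncomputable section

/-! Each conjugation `X ↦ e k · (X · e k)` acts diagonally: for `1 ≤ k ≤ 6` it negates the
coordinates `0, k, 7 - k, 7` and fixes the others, while conjugation by `e 7` is the identity.
The signed sum of these sign vectors is `8` at coordinates `0` and `7` and `0` elsewhere. -/

theorem e_one_omul_omul_e_one (X : Fin 8 → ℝ) :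
    omul (e 1) (omul X (e 1)) = ![-1, -1, 1, 1, 1, 1, -1, -1] * X := by
  ext j; fin_cases j <;> simp [omul, e]

theorem e_two_omul_omul_e_two (X : Fin 8 → ℝ) :
    omul (e 2) (omul X (e 2)) = ![-1, 1, -1, 1, 1, -1, 1, -1] * X := by
  ext j; fin_cases j <;> simp [omul, e]

theorem e_three_omul_omul_e_three (X : Fin 8 → ℝ) :
    omul (e 3) (omul X (e 3)) = ![-1, 1, 1, -1, -1, 1, 1, -1] * X := by
  ext j; fin_cases j <;> simp [omul, e]

theorem e_four_omul_omul_e_four (X : Fin 8 → ℝ) :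
    omul (e 4) (omul X (e 4)) = ![-1, 1, 1, -1, -1, 1, 1, -1] * X := by
  ext j; fin_cases j <;> simp [omul, e]

theorem e_five_omul_omul_e_five (X : Fin 8 → ℝ) :
    omul (e 5) (omul X (e 5)) = ![-1, 1, -1, 1, 1, -1, 1, -1] * X := by
  ext j; fin_cases j <;> simp [omul, e]

theorem e_six_omul_omul_e_six (X : Fin 8 → ℝ) :
    omul (e 6) (omul X (e 6)) = ![-1, -1, 1, 1, 1, 1, -1, -1] * X := by
  ext j; fin_cases j <;> simp [omul, e]

theorem e_seven_omul_omul_e_seven (X : Fin 8 → ℝ) : omul (e 7) (omul X (e 7)) = X := by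
  ext j; fin_cases j <;> simp [omul, e]

/-- The sum of the eight basis conjugations of `X` equals `8·X₀ • e₀ + 8·X₇ • e₇`. -/
theorem sum_basis_conjugations (X : Fin 8 → ℝ) :
    X - (omul (e 1) (omul X (e 1)) + omul (e 2) (omul X (e 2)) + omul (e 3) (omul X (e 3)) +
         omul (e 4) (omul X (e 4)) + omul (e 5) (omul X (e 5)) + omul (e 6) (omul X (e 6))) +
      omul (e 7) (omul X (e 7)) = (8 * X 0) • e 0 + (8 * X 7) • e 7 := by
  rw [e_one_omul_omul_e_one, e_two_omul_omul_e_two, e_three_omul_omul_e_three,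
    e_four_omul_omul_e_four, e_five_omul_omul_e_five, e_six_omul_omul_e_six,
    e_seven_omul_omul_e_seven]
  have sign_sum : (1 - (![-1, -1, 1, 1, 1, 1, -1, -1] + ![-1, 1, -1, 1, 1, -1, 1, -1] +
      ![-1, 1, 1, -1, -1, 1, 1, -1] + ![-1, 1, 1, -1, -1, 1, 1, -1] +
      ![-1, 1, -1, 1, 1, -1, 1, -1] + ![-1, -1, 1, 1, 1, 1, -1, -1]) + 1 : Fin 8 → ℝ) =
      ![8, 0, 0, 0, 0, 0, 0, 8] := by
    ext j
    simp only [Pi.add_apply, Pi.sub_apply, Pi.one_apply]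
    fin_cases j <;> norm_num
  calc _ = ![8, 0, 0, 0, 0, 0, 0, 8] * X := by rw [← sign_sum]; ring
    _ = (8 * X 0) • e 0 + (8 * X 7) • e 7 := by ext j; fin_cases j <;> simp [e]
end
end
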